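/- Let X be a geodesic δ-hyperbolic metric space and let Q₁ ≠ Q₂ be two C-quasiconvex subsets of X admitting closest-point projections π_{Q₁} : X → Q₁ and π_{Q₂} : X → Q₂. Then there is a constant B, depending only on δ and C, such that for every x ∈ X: if d_X(π_{Q₁}(x), π_{Q₁}(Q₂)) > B, then d_X(π_{Q₂}(x), π_{Q₂}(Q₁)) ≤ B (here d_X(z, S) denotes the infimal distance from a point z to a set S, and π_{Q₁}(Q₂) denotes the image of Q₂ under π_{Q₁}). -/

import Mathlib

open Metric Set
open scoped Classical

noncomputable section

/-! ### Metric geometry preliminaries -/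

section MetricPrelims

variable {X : Type*} [MetricSpace X] {Y : Type*} [MetricSpace Y]

/-- A geodesic from `x` to `y`, parametrized by arclength on `[0, dist x y]`. -/
def IsGeodesicSegment (γ : ℝ → X) (x y : X) : Prop :=
  γ 0 = x ∧ γ (dist x y) = y ∧
    ∀ s ∈ Set.Icc (0 : ℝ) (dist x y), ∀ t ∈ Set.Icc (0 : ℝ) (dist x y),
      dist (γ s) (γ t) = |s - t|

/-- A geodesic metric space: any two points are joined by a geodesic. -/
def IsGeodesicSpace (X : Type*) [MetricSpace X] : Prop :=
  ∀ x y : X, ∃ γ : ℝ → X, IsGeodesicSegment γ x y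

/-- `δ`-hyperbolicity: all geodesic triangles are `δ`-thin, i.e. each side lies in the
`δ`-neighbourhood of the union of the other two sides. -/
def IsDeltaHyperbolic (X : Type*) [MetricSpace X] (δ : ℝ) : Prop :=
  ∀ (x y z : X) (γ₁ γ₂ γ₃ : ℝ → X),
    IsGeodesicSegment γ₁ x y → IsGeodesicSegment γ₂ y z → IsGeodesicSegment γ₃ x z →
    ∀ t ∈ Set.Icc (0 : ℝ) (dist x z),
      Metric.infDist (γ₃ t)
        (γ₁ '' Set.Icc (0 : ℝ) (dist x y) ∪ γ₂ '' Set.Icc (0 : ℝ) (dist y z)) ≤ δ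

/-- `C`-quasiconvexity: geodesics between points of `Q` stay in the `C`-neighbourhood of `Q`. -/
def IsQuasiconvex (C : ℝ) (Q : Set X) : Prop :=
  ∀ x ∈ Q, ∀ y ∈ Q, ∀ γ : ℝ → X, IsGeodesicSegment γ x y →
    ∀ t ∈ Set.Icc (0 : ℝ) (dist x y), Metric.infDist (γ t) Q ≤ C

/-- A closest-point projection onto a subset `Q`. -/
def IsClosestPointProj (Q : Set X) (π : X → X) : Prop :=
  (∀ x, π x ∈ Q) ∧ ∀ x : X, dist x (π x) = Metric.infDist x Q

/-- `(lam, eps)`-quasi-isometric embedding. -/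
def IsQIEmbedding (lam eps : ℝ) (f : Y → X) : Prop :=
  ∀ a b : Y, dist a b / lam - eps ≤ dist (f a) (f b) ∧ dist (f a) (f b) ≤ lam * dist a b + eps

/-- `(lam, eps)`-quasi-isometry: quasi-isometric embedding with `eps`-coarsely dense image.
A `lam`-quasi-isometry means a `(lam, lam)`-quasi-isometry. -/
def IsQuasiIsometry (lam eps : ℝ) (f : Y → X) : Prop :=
  IsQIEmbedding lam eps f ∧ ∀ x : X, ∃ y : Y, dist x (f y) ≤ eps

/-- Gromov product. -/
def gromovProd (x y w : X) : ℝ := (dist x w + dist y w - dist x y) / 2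

/-- Gromov hyperbolicity via the four-point condition (for a group with the word metric,
this is equivalent to hyperbolicity of its Cayley graph). -/
def IsGromovHyperbolic (X : Type*) [MetricSpace X] : Prop :=
  ∃ δ : ℝ, 0 ≤ δ ∧ ∀ w x y z : X,
    min (gromovProd x y w) (gromovProd y z w) - δ ≤ gromovProd x z w

/-- A discrete geodesic segment, with domain `{0, …, n}` (this is the notion of geodesic
appropriate to the vertex set of a Cayley graph). -/
def IsDiscreteGeodesicSeg (γ : ℕ → X) (n : ℕ) : Prop :=
  ∀ i, i ≤ n → ∀ j, j ≤ n → dist (γ i) (γ j) = |(i : ℝ) - (j : ℝ)|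

/-- A discrete geodesic ray. -/
def IsDiscreteGeodesicRay (γ : ℕ → X) : Prop :=
  ∀ i j : ℕ, dist (γ i) (γ j) = |(i : ℝ) - (j : ℝ)|

/-- A discrete `(k,c)`-quasi-geodesic with domain `{0, …, n}`. -/
def IsDiscreteQG (k c : ℝ) (μ : ℕ → X) (n : ℕ) : Prop :=
  ∀ i, i ≤ n → ∀ j, j ≤ n →
    |(i : ℝ) - (j : ℝ)| / k - c ≤ dist (μ i) (μ j) ∧
      dist (μ i) (μ j) ≤ k * |(i : ℝ) - (j : ℝ)| + c

/-- A discrete `(k,c)`-quasi-geodesic ray. -/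
def IsDiscreteQGRay (k c : ℝ) (α : ℕ → X) : Prop :=
  ∀ i j : ℕ,
    |(i : ℝ) - (j : ℝ)| / k - c ≤ dist (α i) (α j) ∧
      dist (α i) (α j) ≤ k * |(i : ℝ) - (j : ℝ)| + c

/-- A set `A` (e.g. the image of a geodesic) is `M`-Morse, for a Morse gauge
`M : [1,∞) × [0,∞) → [0,∞)`, if every `(k,c)`-quasi-geodesic with endpoints on `A`
lies in the `M k c`-neighbourhood of `A`. -/
def IsMorseSet (M : ℝ → ℝ → ℝ) (A : Set X) : Prop :=
  ∀ k c : ℝ, 1 ≤ k → 0 ≤ c → ∀ (n : ℕ) (μ : ℕ → X), IsDiscreteQG k c μ n →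
    μ 0 ∈ A → μ n ∈ A → ∀ i, i ≤ n → ∃ a ∈ A, dist (μ i) a ≤ M k c

/-- A continuous-parameter `θ`-quasi-geodesic segment, with domain `[0, T]`. -/
def IsQGSegReal (θ : ℝ) (α : ℝ → X) (T : ℝ) : Prop :=
  ∀ s ∈ Set.Icc (0 : ℝ) T, ∀ t ∈ Set.Icc (0 : ℝ) T,
    |s - t| / θ - θ ≤ dist (α s) (α t) ∧ dist (α s) (α t) ≤ θ * |s - t| + θ

/-- A Morse geodesic ray that is `(M, κ, L)`-incompatible: some `(k,c)`-quasi-geodesic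
with endpoints on `β|_{[0,L]}` contains a point at distance more than
`M k (c + 2κ) + 2κ` from `β`. -/
def IsIncompatibleRay (M : ℝ → ℝ → ℝ) (κ L : ℝ) (β : ℕ → X) : Prop :=
  ∃ (k c : ℝ) (n : ℕ) (μ : ℕ → X), 1 ≤ k ∧ 0 ≤ c ∧ IsDiscreteQG k c μ n ∧
    (∃ i : ℕ, (i : ℝ) ≤ L ∧ μ 0 = β i) ∧ (∃ j : ℕ, (j : ℝ) ≤ L ∧ μ n = β j) ∧
    ∃ i ≤ n, ∀ m : ℕ, M k (c + 2 * κ) + 2 * κ < dist (μ i) (β m)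

end MetricPrelims

/-! ### Finitely generated groups with word metrics, and actions on hyperbolic spaces -/

section GroupPrelims

variable {G : Type*} [Group G] [MetricSpace G]

/-- The metric on `G` is the word metric of a finite generating set. -/
def IsWordMetricGroup (G : Type*) [Group G] [MetricSpace G] : Prop :=
  ∃ S : Finset G, Subgroup.closure (S : Set G) = ⊤ ∧
    ∀ a b : G, dist a b =
      (sInf {n : ℕ | ∃ l : List G, (∀ x ∈ l, x ∈ S ∨ x⁻¹ ∈ S) ∧ a * l.prod = b ∧
        l.length = n} : ℕ)

/-- A group is virtually cyclic if it has a cyclic subgroup of finite index. -/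
def VirtuallyCyclic (G : Type*) [Group G] : Prop :=
  ∃ H : Subgroup G, H.FiniteIndex ∧ IsCyclic H

variable {X : Type*} [MetricSpace X] [MulAction G X]

/-- The image of a subset of `G` under the orbit map `g ↦ g • x₀`. -/
def orbSet (x₀ : X) (A : Set G) : Set X := (fun a : G => a • x₀) '' A

/-- An `X`-projection onto `A ⊆ G`: a retraction `π : G → A` such that `π g • x₀` is a
closest point of `A • x₀` to `g • x₀`. -/
def IsXProjection (x₀ : X) (A : Set G) (π : G → G) : Prop :=
  (∀ g : G, π g ∈ A) ∧ (∀ a ∈ A, π a = a) ∧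
    ∀ g : G, dist (g • x₀) (π g • x₀) = Metric.infDist (g • x₀) (orbSet x₀ A)

/-- `d_α(a,b)`: the diameter in `X` of `ρ(π_α(a) ∪ π_α(b))`, which for points equals the
distance between the projected orbit points. -/
def dproj (x₀ : X) (π : G → G) (a b : G) : ℝ := dist (π a • x₀) (π b • x₀)

/-- Partial Morse detectability: for every Morse gauge `M` there is `lam` such that
`M`-Morse geodesics (segments and rays) in `G` map to `lam`-quasi-geodesics in `X`
under the orbit map. -/
def PartialMorseDetectable (G : Type*) [Group G] [MetricSpace G] (X : Type*) [MetricSpace X]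
    [MulAction G X] (x₀ : X) : Prop :=
  ∀ M : ℝ → ℝ → ℝ, ∃ lam : ℝ, 1 ≤ lam ∧
    ((∀ (γ : ℕ → G) (n : ℕ), IsDiscreteGeodesicSeg γ n → IsMorseSet M (γ '' {i | i ≤ n}) →
        IsDiscreteQG lam lam (fun i => γ i • x₀) n) ∧
      (∀ γ : ℕ → G, IsDiscreteGeodesicRay γ → IsMorseSet M (Set.range γ) →
        IsDiscreteQGRay lam lam (fun i => γ i • x₀)))

/-- Quasi-isometries of `G` descend to `X`: for each `ν` there is `lam` such that every
`ν`-quasi-isometry `φ` of `G` induces a `lam`-quasi-isometry `φb` of `X` with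
`dist (φ g • x) (φb (g • x)) ≤ lam` for all `g, x`. -/
def QIsDescend (G : Type*) [Group G] [MetricSpace G] (X : Type*) [MetricSpace X]
    [MulAction G X] : Prop :=
  ∀ ν : ℝ, 1 ≤ ν → ∃ lam : ℝ, 1 ≤ lam ∧
    ∀ φ : G → G, IsQuasiIsometry ν ν φ →
      ∃ φb : X → X, IsQuasiIsometry lam lam φb ∧
        ∀ (g : G) (x : X), dist (φ g • x) (φb (g • x)) ≤ lam

/-- `g` is loxodromic for the action on `X`: `n ↦ gⁿ • x₀` is a quasi-isometric embedding
of `ℤ`. -/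
def IsLoxodromic (x₀ : X) (g : G) : Prop :=
  ∃ lam : ℝ, 1 ≤ lam ∧ ∀ m n : ℤ,
    |(m : ℝ) - (n : ℝ)| / lam - lam ≤ dist ((g ^ m) • x₀) ((g ^ n) • x₀) ∧
      dist ((g ^ m) • x₀) ((g ^ n) • x₀) ≤ lam * |(m : ℝ) - (n : ℝ)| + lam

/-- `g` satisfies the WPD condition for the action on `X`. -/
def IsWPD (X : Type*) [MetricSpace X] [MulAction G X] (g : G) : Prop :=
  ∀ κ : ℝ, 0 < κ → ∀ x : X, ∃ N : ℕ,
    {h : G | dist x (h • x) < κ ∧ dist ((g ^ N) • x) (h • (g ^ N) • x) < κ}.Finite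

/-- The elementary closure `E(g)` of a loxodromic WPD element: the set of `h ∈ G` such
that `h⟨g⟩x₀` and `⟨g⟩x₀` are at finite Hausdorff distance in `X`. -/
def elemClosure (x₀ : X) (g : G) : Set G :=
  {h : G | EMetric.hausdorffEdist
      (Set.range fun n : ℤ => (h * g ^ n) • x₀)
      (Set.range fun n : ℤ => (g ^ n) • x₀) ≠ ⊤}

end GroupPrelims

/-! ### Markov chains -/

section Markov

variable {G : Type*} [Group G] [MetricSpace G]

/-- A Markov kernel on `G`: nonnegative transition probabilities with unit row sums. -/
def IsMarkovChain (μ : G → G → ℝ) : Prop :=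
  (∀ a b : G, 0 ≤ μ a b) ∧ ∀ a : G, HasSum (μ a) 1

/-- The probability that the trajectory `(w₀ = o, w₁, …, w_n)` of the Markov chain with
kernel `μ` started at `o` satisfies the event `E`. -/
def chainProb (μ : G → G → ℝ) (o : G) (n : ℕ) (E : (Fin (n + 1) → G) → Prop) : ℝ :=
  ∑' w : Fin (n + 1) → G,
    if w 0 = o ∧ E w then ∏ i : Fin n, μ (w i.castSucc) (w i.succ) else 0

/-- A tame Markov chain: bounded jumps, non-amenability, irreducibility. -/
def TameChain (μ : G → G → ℝ) : Prop :=
  IsMarkovChain μ ∧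
  (∃ S : Finset G, ∀ a b : G, μ a b ≠ 0 → ∃ s ∈ S, b = a * s) ∧
  (∃ A r : ℝ, 0 < A ∧ 0 ≤ r ∧ r < 1 ∧ ∀ (a b : G) (n : ℕ),
      chainProb μ a n (fun w => w (Fin.last n) = b) ≤ A * r ^ n) ∧
  (∀ s : G, ∃ (eps : ℝ) (K : ℕ), 0 < eps ∧ ∀ a : G, ∃ k ≤ K,
      eps ≤ chainProb μ a k (fun w => w (Fin.last k) = a * s))

/-- A quasi-homogeneous Markov chain with constant `ν`. -/
def QuasiHomogeneous (ν : ℝ) (μ : G → G → ℝ) : Prop :=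
  ∀ p q : G, ∃ φ : G → G, Function.Bijective φ ∧ IsQuasiIsometry ν ν φ ∧ φ p = q ∧
    ∀ a b : G, μ (φ a) (φ b) = μ a b

end Markov

/-! ### BBF-type coset projections (for Proposition 5.4) -/

section Coset

variable {G : Type*} [Group G] [MetricSpace G] {X : Type*} [MetricSpace X] [MulAction G X]

/-- Projection to the coset `h·γ` built from a base projection `π₀` to `γ` by
`π_{hγ}(z) = h · π₀(h⁻¹ z)`. -/
def cosetProj (π₀ : G → Set G) (h z : G) : Set G := (fun a : G => h * a) '' π₀ (h⁻¹ * z)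

/-- `d_{hγ}(x,y)`: the diameter in `X` of `ρ(π_{hγ}(x) ∪ π_{hγ}(y))`. -/
def cosetDist (x₀ : X) (π₀ : G → Set G) (h : G) (x y : G) : ℝ :=
  Metric.diam ((fun a : G => a • x₀) '' (cosetProj π₀ h x ∪ cosetProj π₀ h y))

/-- The distance-formula sum `Σ_{H_T(o,p)}[x,y]`: the sum over cosets `hγ` (indexed by a
transversal `R`) with `d_{hγ}(o,p) ≥ T` and `π_{hγ}(x) ≠ π_{hγ}(y)` of `d_{hγ}(x,y)`. -/
def distFormulaSum (x₀ : X) (π₀ : G → Set G) (R : Set G) (T : ℝ) (o p x y : G) : ℝ :=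
  ∑' h : R, if T ≤ cosetDist x₀ π₀ (h : G) o p ∧
      cosetProj π₀ (h : G) x ≠ cosetProj π₀ (h : G) y
    then cosetDist x₀ π₀ (h : G) x y else 0

end Coset

/-! ### Geometrically faithful pairs -/

/-- The parameters of a (quasi-)geometrically faithful pair: the hyperbolicity (and
coarse-surjectivity/Lipschitz) constant `δ`, the function `ν ↦ λ` of the
"quasi-isometries descend" condition, and the functions `M ↦ λ` and `λ ↦ M` of the
Morse-detectability condition. -/
structure GFParams where
  delta : ℝ
  descend : ℝ → ℝ
  detectFwd : (ℝ → ℝ → ℝ) → ℝ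
  detectBwd : ℝ → (ℝ → ℝ → ℝ)

section Pairs

variable {G : Type*} [Group G] [MetricSpace G] {X : Type*} [MetricSpace X]

/-- Full Morse detectability for a map `ρ : G → X`, with constants governed by `P`:
`M`-Morse geodesics of `G` map to `P.detectFwd M`-quasi-geodesics, and geodesics of `G`
mapping to `lam`-quasi-geodesics are `P.detectBwd lam`-Morse. -/
def MorseDetectablePair (P : GFParams) (ρ : G → X) : Prop :=
  (∀ M : ℝ → ℝ → ℝ,
    (∀ (γ : ℕ → G) (n : ℕ), IsDiscreteGeodesicSeg γ n → IsMorseSet M (γ '' {i | i ≤ n}) →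
      IsDiscreteQG (P.detectFwd M) (P.detectFwd M) (fun i => ρ (γ i)) n) ∧
    (∀ γ : ℕ → G, IsDiscreteGeodesicRay γ → IsMorseSet M (Set.range γ) →
      IsDiscreteQGRay (P.detectFwd M) (P.detectFwd M) (fun i => ρ (γ i)))) ∧
  (∀ lam : ℝ, 1 ≤ lam →
    (∀ (γ : ℕ → G) (n : ℕ), IsDiscreteGeodesicSeg γ n →
      IsDiscreteQG lam lam (fun i => ρ (γ i)) n →
        IsMorseSet (P.detectBwd lam) (γ '' {i | i ≤ n})) ∧
    (∀ γ : ℕ → G, IsDiscreteGeodesicRay γ →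
      IsDiscreteQGRay lam lam (fun i => ρ (γ i)) → IsMorseSet (P.detectBwd lam) (Set.range γ)))

/-- A quasi-geometrically faithful pair `(G, X)` with map `ρ` and parameters `P`
(Definition "quasi-geometrically faithful pair"). -/
def IsQGFPair (P : GFParams) (G : Type*) [Group G] [MetricSpace G]
    (X : Type*) [MetricSpace X] (ρ : G → X) : Prop :=
  0 ≤ P.delta ∧ IsGeodesicSpace X ∧ IsDeltaHyperbolic X P.delta ∧
  (∀ x : X, ∃ g : G, dist x (ρ g) ≤ P.delta) ∧
  (∀ a b : G, dist (ρ a) (ρ b) ≤ P.delta * dist a b + P.delta) ∧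
  (∃ (M : ℝ → ℝ → ℝ) (γ : ℕ → G), IsDiscreteGeodesicRay γ ∧ IsMorseSet M (Set.range γ)) ∧
  (∀ ν : ℝ, 1 ≤ ν → ∀ φ : G → G, IsQuasiIsometry ν ν φ →
    ∃ φb : X → X, IsQuasiIsometry (P.descend ν) (P.descend ν) φb ∧
      ∀ g : G, dist (ρ (φ g)) (φb (ρ g)) ≤ P.descend ν) ∧
  MorseDetectablePair P ρ ∧
  (∀ r : ℝ, 0 ≤ r → ∃ R : ℝ, 0 ≤ R ∧ ∀ x y : X, R ≤ dist x y → ∀ s : ℝ, 0 ≤ s →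
    Bornology.IsBounded
      ({a : G | ∃ b : G, ρ b ∈ Metric.closedBall x r ∧ dist a b ≤ s} ∩
        ρ ⁻¹' Metric.closedBall y r))

/-- An acylindrical action of `G` on `X` (via `•`). -/
def IsAcylindricalSMul (G : Type*) [Group G] (X : Type*) [MetricSpace X] [MulAction G X] :
    Prop :=
  ∀ κ : ℝ, 0 ≤ κ → ∃ (R : ℝ) (N : ℕ), ∀ x y : X, R ≤ dist x y →
    {g : G | dist x (g • x) ≤ κ ∧ dist y (g • y) ≤ κ}.Finite ∧
    {g : G | dist x (g • x) ≤ κ ∧ dist y (g • y) ≤ κ}.ncard ≤ N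

/-- A geometrically faithful pair `(G, X)` with basepoint `x₀` and parameters `P`
(Definition "geometrically faithful pair"): `G` acts on the geodesic `P.delta`-hyperbolic
space `X` coboundedly, acylindrically, non-elementarily; quasi-isometries descend; and
Morse detectability holds (both directions), all with constants governed by `P`. -/
def IsGFPair (P : GFParams) (G : Type*) [Group G] [MetricSpace G]
    (X : Type*) [MetricSpace X] [MulAction G X] [IsIsometricSMul G X] (x₀ : X) : Prop :=
  0 ≤ P.delta ∧ IsGeodesicSpace X ∧ IsDeltaHyperbolic X P.delta ∧
  (∀ x : X, ∃ g : G, dist x (g • x₀) ≤ P.delta) ∧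
  IsAcylindricalSMul G X ∧
  (¬ Bornology.IsBounded (Set.range fun g : G => g • x₀)) ∧
  (¬ VirtuallyCyclic G) ∧
  (∀ ν : ℝ, 1 ≤ ν → ∀ φ : G → G, IsQuasiIsometry ν ν φ →
    ∃ φb : X → X, IsQuasiIsometry (P.descend ν) (P.descend ν) φb ∧
      ∀ (g : G) (x : X), dist (φ g • x) (φb (g • x)) ≤ P.descend ν) ∧
  MorseDetectablePair P (fun g : G => g • x₀)

end Pairs

/-! ### Actions given by homomorphisms to isometry groups, and acylindrical hyperbolicity -/

section HomActions

variable {G : Type*} [Group G] {Y : Type*} [MetricSpace Y]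

/-- `g` is loxodromic for the action `a` with basepoint `y₀`. -/
def IsLoxodromicHom (a : G →* (Y ≃ᵢ Y)) (y₀ : Y) (g : G) : Prop :=
  ∃ lam : ℝ, 1 ≤ lam ∧ ∀ m n : ℤ,
    |(m : ℝ) - (n : ℝ)| / lam - lam ≤ dist (a (g ^ m) y₀) (a (g ^ n) y₀) ∧
      dist (a (g ^ m) y₀) (a (g ^ n) y₀) ≤ lam * |(m : ℝ) - (n : ℝ)| + lam

/-- `g` satisfies the WPD condition for the action `a`. -/
def IsWPDHom (a : G →* (Y ≃ᵢ Y)) (g : G) : Prop :=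
  ∀ κ : ℝ, 0 < κ → ∀ y : Y, ∃ N : ℕ,
    {h : G | dist y (a h y) < κ ∧ dist (a (g ^ N) y) (a h (a (g ^ N) y)) < κ}.Finite

/-- The action `a` is acylindrical. -/
def IsAcylindricalHom (a : G →* (Y ≃ᵢ Y)) : Prop :=
  ∀ κ : ℝ, 0 ≤ κ → ∃ (R : ℝ) (N : ℕ), ∀ x y : Y, R ≤ dist x y →
    {g : G | dist x (a g x) ≤ κ ∧ dist y (a g y) ≤ κ}.Finite ∧
    {g : G | dist x (a g x) ≤ κ ∧ dist y (a g y) ≤ κ}.ncard ≤ N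

end HomActions

/-- `G` is acylindrically hyperbolic: not virtually cyclic, and admits an acylindrical
isometric action with unbounded orbits on a geodesic Gromov hyperbolic space. -/
def AcylindricallyHyperbolic (G : Type*) [Group G] : Prop :=
  ¬ VirtuallyCyclic G ∧
    ∃ (Y : Type) (_ : MetricSpace Y) (a : G →* (Y ≃ᵢ Y)),
      IsGeodesicSpace Y ∧ (∃ δ : ℝ, 0 ≤ δ ∧ IsDeltaHyperbolic Y δ) ∧
      IsAcylindricalHom a ∧
      ∃ y₀ : Y, ¬ Bornology.IsBounded (Set.range fun g : G => a g y₀)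

/-! Let `a`, `b` be the closest points of `Q₁` to `x` and to `p = π₂ x`. Closest points onto a
quasiconvex set satisfy a coarse reverse triangle inequality, so the geodesic `[x, b]` passes near
`a`. By thinness of the triangle `x p b` that point is near `[x, p]` or near `[p, b]`; the latter
would force `b` near `a`. So `[x, p]` passes near `a ∈ Q₁`. Since `p` is also a closest point of
`Q₂` to every point of `[x, p]`, coarse Lipschitzness of closest points onto `Q₂` puts `π₂ a`
near `p`. -/

namespace IsGeodesicSegment

variable {X : Type*} [MetricSpace X] {γ : ℝ → X} {x y : X}

theorem left_mem_image (hγ : IsGeodesicSegment γ x y) : x ∈ γ '' Icc 0 (dist x y) :=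
  ⟨0, ⟨le_rfl, dist_nonneg⟩, hγ.1⟩

theorem right_mem_image (hγ : IsGeodesicSegment γ x y) : y ∈ γ '' Icc 0 (dist x y) :=
  ⟨dist x y, ⟨dist_nonneg, le_rfl⟩, hγ.2.1⟩

theorem continuousOn (hγ : IsGeodesicSegment γ x y) : ContinuousOn γ (Icc 0 (dist x y)) :=
  (LipschitzOnWith.of_dist_le_mul (K := 1) fun s hs t ht => by
    rw [hγ.2.2 s hs t ht, NNReal.coe_one, one_mul, Real.dist_eq]).continuousOn

theorem isCompact_image (hγ : IsGeodesicSegment γ x y) : IsCompact (γ '' Icc 0 (dist x y)) :=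
  isCompact_Icc.image_of_continuousOn hγ.continuousOn

theorem isPreconnected_image (hγ : IsGeodesicSegment γ x y) :
    IsPreconnected (γ '' Icc 0 (dist x y)) :=
  isPreconnected_Icc.image _ hγ.continuousOn

theorem dist_add_dist_eq (hγ : IsGeodesicSegment γ x y) {z : X}
    (hz : z ∈ γ '' Icc 0 (dist x y)) : dist x z + dist z y = dist x y := by
  obtain ⟨t, ht, rfl⟩ := hz
  have hx := hγ.2.2 0 ⟨le_rfl, dist_nonneg⟩ t ht
  have hy := hγ.2.2 t ht _ ⟨dist_nonneg, le_rfl⟩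
  rw [hγ.1] at hx
  rw [hγ.2.1] at hy
  rw [hx, hy, abs_of_nonpos (by linarith [ht.1]), abs_of_nonpos (by linarith [ht.2])]
  ring

end IsGeodesicSegment

section ClosestPoint

variable {X : Type*} [MetricSpace X] {Q : Set X} {x z p : X}

def IsClosestPoint (Q : Set X) (x p : X) : Prop :=
  p ∈ Q ∧ dist x p = infDist x Q

theorem IsClosestPointProj.isClosestPoint {π : X → X} (hπ : IsClosestPointProj Q π) (x : X) :
    IsClosestPoint Q x (π x) :=
  ⟨hπ.1 x, hπ.2 x⟩

theorem IsClosestPoint.of_dist_add_dist_eq (hp : IsClosestPoint Q x p)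
    (hz : dist x z + dist z p = dist x p) : IsClosestPoint Q z p := by
  refine ⟨hp.1, le_antisymm ?_ (infDist_le_dist_of_mem hp.1)⟩
  linarith [hp.2, infDist_le_infDist_add_dist (x := x) (y := z) (s := Q)]

end ClosestPoint

namespace IsDeltaHyperbolic

variable {X : Type*} [MetricSpace X] {δ : ℝ} {x y z : X} {γ₁ γ₂ γ₃ : ℝ → X}

theorem exists_dist_le_of_mem (hX : IsDeltaHyperbolic X δ) (h₁ : IsGeodesicSegment γ₁ x y)
    (h₂ : IsGeodesicSegment γ₂ y z) (h₃ : IsGeodesicSegment γ₃ x z) {w : X}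
    (hw : w ∈ γ₃ '' Icc 0 (dist x z)) :
    ∃ v ∈ γ₁ '' Icc 0 (dist x y) ∪ γ₂ '' Icc 0 (dist y z), dist w v ≤ δ := by
  obtain ⟨t, ht, rfl⟩ := hw
  obtain ⟨v, hv, hdist⟩ := (h₁.isCompact_image.union h₂.isCompact_image).exists_infDist_eq_dist
    ⟨x, Or.inl h₁.left_mem_image⟩ (γ₃ t)
  exact ⟨v, hv, hdist ▸ hX x y z γ₁ γ₂ γ₃ h₁ h₂ h₃ t ht⟩

theorem exists_near_both_sides (hX : IsDeltaHyperbolic X δ) (h₁ : IsGeodesicSegment γ₁ x y)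
    (h₂ : IsGeodesicSegment γ₂ y z) (h₃ : IsGeodesicSegment γ₃ x z) :
    ∃ w ∈ γ₃ '' Icc 0 (dist x z), ∃ u ∈ γ₁ '' Icc 0 (dist x y), ∃ v ∈ γ₂ '' Icc 0 (dist y z),
      dist w u ≤ δ ∧ dist w v ≤ δ := by
  set I₁ := γ₁ '' Icc 0 (dist x y)
  set I₂ := γ₂ '' Icc 0 (dist y z)
  have hδ : 0 ≤ δ := infDist_nonneg.trans (hX x y z γ₁ γ₂ γ₃ h₁ h₂ h₃ 0 ⟨le_rfl, dist_nonneg⟩)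
  have hclosed (I : Set X) : IsClosed {w | infDist w I ≤ δ} :=
    isClosed_le (continuous_infDist_pt I) continuous_const
  have hcover : γ₃ '' Icc 0 (dist x z) ⊆ {w | infDist w I₁ ≤ δ} ∪ {w | infDist w I₂ ≤ δ} := by
    intro w hw
    obtain ⟨v, hv | hv, hwv⟩ := hX.exists_dist_le_of_mem h₁ h₂ h₃ hw
    · exact Or.inl ((infDist_le_dist_of_mem hv).trans hwv)
    · exact Or.inr ((infDist_le_dist_of_mem hv).trans hwv)
  obtain ⟨w, hw, hw₁, hw₂⟩ := isPreconnected_closed_iff.mp h₃.isPreconnected_image _ _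
    (hclosed I₁) (hclosed I₂) hcover
    ⟨x, h₃.left_mem_image, (infDist_zero_of_mem h₁.left_mem_image).trans_le hδ⟩
    ⟨z, h₃.right_mem_image, (infDist_zero_of_mem h₂.right_mem_image).trans_le hδ⟩
  obtain ⟨u, hu, hwu⟩ := h₁.isCompact_image.exists_infDist_eq_dist ⟨x, h₁.left_mem_image⟩ w
  obtain ⟨v, hv, hwv⟩ := h₂.isCompact_image.exists_infDist_eq_dist ⟨y, h₂.left_mem_image⟩ w
  exact ⟨w, hw, u, hu, v, hv, hwu ▸ hw₁, hwv ▸ hw₂⟩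

end IsDeltaHyperbolic

namespace IsClosestPoint

variable {X : Type*} [MetricSpace X] {δ C : ℝ} {Q : Set X} {x p q : X}

theorem exists_mem_geodesic_dist_le (hX : IsDeltaHyperbolic X δ) (hgeo : IsGeodesicSpace X)
    (hQ : IsQuasiconvex C Q) (hp : IsClosestPoint Q x p) (hq : q ∈ Q) {γ : ℝ → X}
    (hγ : IsGeodesicSegment γ x q) : ∃ z ∈ γ '' Icc 0 (dist x q), dist z p ≤ 3 * δ + C := by
  obtain ⟨γ₁, h₁⟩ := hgeo x p
  obtain ⟨γ₂, h₂⟩ := hgeo p q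
  obtain ⟨z, hz, u, hu, v, ⟨s, hs, rfl⟩, hzu, hzv⟩ := hX.exists_near_both_sides h₁ h₂ hγ
  have hup : dist u p = infDist u Q := (hp.of_dist_add_dist_eq (h₁.dist_add_dist_eq hu)).2
  refine ⟨z, hz, ?_⟩
  linarith [dist_triangle z u p, dist_triangle_left u (γ₂ s) z, hQ p hp.1 q hq γ₂ h₂ s hs,
    infDist_le_infDist_add_dist (x := u) (y := γ₂ s) (s := Q)]

theorem dist_add_dist_le (hX : IsDeltaHyperbolic X δ) (hgeo : IsGeodesicSpace X)
    (hQ : IsQuasiconvex C Q) (hp : IsClosestPoint Q x p) (hq : q ∈ Q) :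
    dist x p + dist p q ≤ dist x q + 2 * (3 * δ + C) := by
  obtain ⟨γ, hγ⟩ := hgeo x q
  obtain ⟨z, hz, hzp⟩ := hp.exists_mem_geodesic_dist_le hX hgeo hQ hq hγ
  linarith [hγ.dist_add_dist_eq hz, dist_triangle x z p, dist_triangle_left p q z]

theorem dist_le_two_mul_dist_add (hX : IsDeltaHyperbolic X δ) (hgeo : IsGeodesicSpace X)
    (hQ : IsQuasiconvex C Q) {u v p' : X} (hp : IsClosestPoint Q u p)
    (hp' : IsClosestPoint Q v p') : dist p p' ≤ 2 * dist u v + 2 * (3 * δ + C) := by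
  have hvp' : dist v p' ≤ dist v p := hp'.2 ▸ infDist_le_dist_of_mem hp.1
  linarith [hp.dist_add_dist_le hX hgeo hQ hp'.1, dist_triangle u v p', dist_triangle v u p,
    dist_comm u v]

theorem exists_mem_geodesic_near_of_far (hX : IsDeltaHyperbolic X δ) (hgeo : IsGeodesicSpace X)
    (hQ : IsQuasiconvex C Q) {a b : X} (ha : IsClosestPoint Q x a) (hb : IsClosestPoint Q p b)
    (hab : 3 * (3 * δ + C) + δ < dist a b) {γ : ℝ → X} (hγ : IsGeodesicSegment γ x p) :
    ∃ z ∈ γ '' Icc 0 (dist x p), dist z a ≤ 3 * δ + C + δ := by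
  obtain ⟨γxb, hxb⟩ := hgeo x b
  obtain ⟨γpb, hpb⟩ := hgeo p b
  obtain ⟨y, hy, hya⟩ := ha.exists_mem_geodesic_dist_le hX hgeo hQ hb.1 hxb
  obtain ⟨w, hw | hw, hyw⟩ := hX.exists_dist_le_of_mem hγ hpb hxb hy
  · exact ⟨w, hw, by linarith [dist_triangle_left w a y]⟩
  · have hwb := hb.of_dist_add_dist_eq (hpb.dist_add_dist_eq hw)
    linarith [hwb.dist_add_dist_le hX hgeo hQ ha.1, dist_triangle_left w a y,
      dist_nonneg (x := w) (y := b), dist_comm a b]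

end IsClosestPoint

/-- Behrstock inequality, Lemma 2.3. For a geodesic `δ`-hyperbolic space
`X` and distinct `C`-quasiconvex subsets `Q₁ ≠ Q₂` with closest-point projections
`π₁, π₂`, there is `B = B(δ, C)` such that for all `x`: if
`d(π₁ x, π₁(Q₂)) > B` then `d(π₂ x, π₂(Q₁)) ≤ B`. -/
theorem behrstock_inequality_hyperbolic (δ C : ℝ) (hδ : 0 ≤ δ) (hC : 0 ≤ C) :
    ∃ B : ℝ, ∀ (X : Type) [inst : MetricSpace X],
      IsGeodesicSpace X → IsDeltaHyperbolic X δ →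
      ∀ (Q₁ Q₂ : Set X) (π₁ π₂ : X → X), Q₁ ≠ Q₂ →
        IsQuasiconvex C Q₁ → IsQuasiconvex C Q₂ →
        IsClosestPointProj Q₁ π₁ → IsClosestPointProj Q₂ π₂ →
        ∀ x : X, B < Metric.infDist (π₁ x) (π₁ '' Q₂) →
          Metric.infDist (π₂ x) (π₂ '' Q₁) ≤ B := by
  refine ⟨4 * (3 * δ + C) + 2 * δ, fun X _ hgeo hX Q₁ Q₂ π₁ π₂ _ hQ₁ hQ₂ hπ₁ hπ₂ x hfar => ?_⟩
  have ha := hπ₁.isClosestPoint x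
  have hp := hπ₂.isClosestPoint x
  have hab : 3 * (3 * δ + C) + δ < dist (π₁ x) (π₁ (π₂ x)) := by
    linarith [infDist_le_dist_of_mem (mem_image_of_mem π₁ hp.1) (x := π₁ x)]
  obtain ⟨γ, hγ⟩ := hgeo x (π₂ x)
  obtain ⟨z, hz, hza⟩ :=
    ha.exists_mem_geodesic_near_of_far hX hgeo hQ₁ (hπ₁.isClosestPoint _) hab hγ
  have hzp : IsClosestPoint Q₂ z (π₂ x) := hp.of_dist_add_dist_eq (hγ.dist_add_dist_eq hz)
  calc infDist (π₂ x) (π₂ '' Q₁) ≤ dist (π₂ x) (π₂ (π₁ x)) :=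
        infDist_le_dist_of_mem (mem_image_of_mem π₂ ha.1)
    _ ≤ 2 * dist z (π₁ x) + 2 * (3 * δ + C) :=
        hzp.dist_le_two_mul_dist_add hX hgeo hQ₂ (hπ₂.isClosestPoint _)
    _ ≤ 4 * (3 * δ + C) + 2 * δ := by linarith
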